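/- arXiv:2407.11550 — 2 statements merged into one kernel-verified Lean document; each statement's English description precedes it below -/
import Mathlib

section
/- Single-head eviction loss bound: with probability vector A ∈ ℝⁿ, indicator I ∈ {0,1}ⁿ with F = Σ_j I_j A_j > 0, matrix M ∈ ℝ^{n×d} with maximal row L1-norm C, one has ‖A·M − Â·M‖₁ ≤ 2C − 2C·Σ_j I_j A_j, where Â_j = I_j A_j / F. -/
/-- Single-head eviction loss bound. -/
theorem single_head_eviction_bound {n d : ℕ} (A I : Fin n → ℝ)
    (M : Fin n → Fin d → ℝ) (C : ℝ)
    (hA : ∀ j, 0 ≤ A j) (hsum : ∑ j, A j = 1)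
    (hI : ∀ j, I j = 0 ∨ I j = 1) (hF : 0 < ∑ j, I j * A j)
    (hC : ∀ j, ∑ k, |M j k| ≤ C) :
    ∑ k, |(∑ j, A j * M j k) - ∑ j, (I j * A j / (∑ l, I l * A l)) * M j k|
      ≤ 2 * C - 2 * C * ∑ j, I j * A j := by
  set F := ∑ l, I l * A l with hFdef
  have hF1 : F ≤ 1 := by
    rw [← hsum]
    apply Finset.sum_le_sum
    intro j _
    rcases hI j with h | h <;> simp [h, hA j]
  have hn : 0 < n := by
    by_contra h
    push_neg at h
    have : n = 0 := by omega
    subst this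
    simp [hFdef] at hF
  have hC0 : 0 ≤ C :=
    le_trans (Finset.sum_nonneg fun k _ => abs_nonneg _) (hC ⟨0, hn⟩)
  have habs : ∀ j, |A j - I j * A j / F| = A j + I j * A j / F - 2 * (I j * A j) := by
    intro j
    rcases hI j with h | h
    · simp [h, abs_of_nonneg (hA j)]
    · have hle : A j ≤ A j / F := (le_div_iff₀ hF).2 (by nlinarith [hA j])
      rw [h]
      rw [show (1:ℝ) * A j = A j by ring, abs_of_nonpos (by linarith)]
      ring
  have hsumabs : ∑ j, |A j - I j * A j / F| = 2 - 2 * F := by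
    calc ∑ j, |A j - I j * A j / F|
        = ∑ j, (A j + I j * A j / F - 2 * (I j * A j)) :=
          Finset.sum_congr rfl fun j _ => habs j
      _ = (∑ j, A j) + (∑ j, I j * A j) / F - 2 * F := by
          rw [Finset.sum_sub_distrib, Finset.sum_add_distrib, ← Finset.sum_div,
            ← Finset.mul_sum, ← hFdef]
      _ = 2 - 2 * F := by rw [hsum, ← hFdef, div_self hF.ne']; ring
  calc ∑ k, |(∑ j, A j * M j k) - ∑ j, (I j * A j / F) * M j k|
      = ∑ k, |∑ j, (A j - I j * A j / F) * M j k| := by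
        apply Finset.sum_congr rfl
        intro k _
        congr 1
        rw [← Finset.sum_sub_distrib]
        exact Finset.sum_congr rfl fun j _ => by ring
    _ ≤ ∑ k, ∑ j, |A j - I j * A j / F| * |M j k| :=
        Finset.sum_le_sum fun k _ =>
          (Finset.abs_sum_le_sum_abs _ _).trans (le_of_eq (by simp [abs_mul]))
    _ = ∑ j, |A j - I j * A j / F| * ∑ k, |M j k| := by
        rw [Finset.sum_comm]; simp [Finset.mul_sum]
    _ ≤ ∑ j, |A j - I j * A j / F| * C :=
        Finset.sum_le_sum fun j _ => mul_le_mul_of_nonneg_left (hC j) (abs_nonneg _)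
    _ = C * ∑ j, |A j - I j * A j / F| := by
        rw [Finset.mul_sum]; exact Finset.sum_congr rfl fun j _ => by ring
    _ = 2 * C - 2 * C * F := by rw [hsumabs]; ring
end

section
/- Multi-head eviction loss bound (Theorem 1): let h heads each have probability vector A_i ∈ ℝⁿ, indicator I_i ∈ {0,1}ⁿ with F_i = Σ_j I_i^j A_i^j > 0, and matrix M_i ∈ ℝ^{n×d} with row L1-norms bounded by a common constant C. Define y = Σ_i A_i·M_i and ŷ = Σ_i Â_i·M_i where Â_i^j = I_i^j A_i^j/F_i. Then ‖y − ŷ‖₁ ≤ 2hC − 2C Σ_i Σ_j I_i^j A_i^j. -/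
open Finset

lemma head_bound {n d : ℕ} (A I : Fin n → ℝ) (M : Fin n → Fin d → ℝ) (C : ℝ)
    (hA : ∀ j, 0 ≤ A j) (hsum : ∑ j, A j = 1)
    (hI : ∀ j, I j = 0 ∨ I j = 1) (hF : 0 < ∑ l, I l * A l)
    (hC : ∀ j, ∑ k, |M j k| ≤ C) :
    ∑ k, |(∑ j, A j * M j k) - ∑ j, (I j * A j / (∑ l, I l * A l)) * M j k|
      ≤ 2 * C * (1 - ∑ l, I l * A l) := by
  set F := ∑ l, I l * A l with hFdef
  have hFle : F ≤ 1 := by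
    rw [← hsum]
    apply Finset.sum_le_sum
    intro j _
    rcases hI j with h0 | h1
    · simp [h0, hA j]
    · simp [h1]
  have key : ∀ j, |A j - I j * A j / F| = (A j - I j * A j) + (I j * A j / F - I j * A j) := by
    intro j
    rcases hI j with h0 | h1
    · simp [h0, abs_of_nonneg (hA j)]
    · simp only [h1, one_mul]
      rw [abs_of_nonpos]
      · ring
      · have h1F : A j ≤ A j / F := by
          rw [le_div_iff₀ hF]
          nlinarith [hA j]
        linarith
  have hsum_c : ∑ j, |A j - I j * A j / F| = 2 * (1 - F) := by
    have hFne : F ≠ 0 := ne_of_gt hF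
    calc ∑ j, |A j - I j * A j / F|
        = ∑ j, ((A j - I j * A j) + (I j * A j / F - I j * A j)) :=
          Finset.sum_congr rfl fun j _ => key j
      _ = ((∑ j, A j) - F) + ((∑ j, I j * A j) / F - F) := by
          rw [Finset.sum_add_distrib, Finset.sum_sub_distrib, Finset.sum_sub_distrib,
            ← Finset.sum_div]
      _ = 2 * (1 - F) := by
          rw [hsum, ← hFdef, div_self hFne]; ring
  have hdiff : ∀ k, (∑ j, A j * M j k) - ∑ j, (I j * A j / F) * M j k
      = ∑ j, (A j - I j * A j / F) * M j k := by
    intro k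
    rw [← Finset.sum_sub_distrib]
    exact Finset.sum_congr rfl fun j _ => by ring
  calc ∑ k, |(∑ j, A j * M j k) - ∑ j, (I j * A j / F) * M j k|
      ≤ ∑ k, ∑ j, |A j - I j * A j / F| * |M j k| := by
        apply Finset.sum_le_sum
        intro k _
        rw [hdiff k]
        exact (Finset.abs_sum_le_sum_abs _ _).trans
          (le_of_eq (Finset.sum_congr rfl fun j _ => abs_mul _ _))
    _ = ∑ j, |A j - I j * A j / F| * ∑ k, |M j k| := by
        rw [Finset.sum_comm]
        exact Finset.sum_congr rfl fun j _ => (Finset.mul_sum _ _ _).symm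
    _ ≤ ∑ j, |A j - I j * A j / F| * C :=
        Finset.sum_le_sum fun j _ => mul_le_mul_of_nonneg_left (hC j) (abs_nonneg _)
    _ = (∑ j, |A j - I j * A j / F|) * C := by rw [Finset.sum_mul]
    _ = 2 * C * (1 - F) := by rw [hsum_c]; ring

/-- Multi-head eviction loss bound (Theorem 1). -/
theorem multi_head_eviction_bound {h n d : ℕ}
    (A I : Fin h → Fin n → ℝ) (M : Fin h → Fin n → Fin d → ℝ) (C : ℝ)
    (hA : ∀ i j, 0 ≤ A i j) (hsum : ∀ i, ∑ j, A i j = 1)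
    (hI : ∀ i j, I i j = 0 ∨ I i j = 1) (hF : ∀ i, 0 < ∑ j, I i j * A i j)
    (hC : ∀ i j, ∑ k, |M i j k| ≤ C) :
    ∑ k, |(∑ i, ∑ j, A i j * M i j k)
        - ∑ i, ∑ j, (I i j * A i j / (∑ l, I i l * A i l)) * M i j k|
      ≤ 2 * h * C - 2 * C * ∑ i, ∑ j, I i j * A i j := by
  calc ∑ k, |(∑ i, ∑ j, A i j * M i j k)
        - ∑ i, ∑ j, (I i j * A i j / (∑ l, I i l * A i l)) * M i j k|
      ≤ ∑ k, ∑ i, |(∑ j, A i j * M i j k)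
          - ∑ j, (I i j * A i j / (∑ l, I i l * A i l)) * M i j k| := by
        apply Finset.sum_le_sum
        intro k _
        rw [← Finset.sum_sub_distrib]
        exact Finset.abs_sum_le_sum_abs _ _
    _ = ∑ i, ∑ k, |(∑ j, A i j * M i j k)
          - ∑ j, (I i j * A i j / (∑ l, I i l * A i l)) * M i j k| := Finset.sum_comm
    _ ≤ ∑ i, 2 * C * (1 - ∑ j, I i j * A i j) :=
        Finset.sum_le_sum fun i _ =>
          head_bound (A i) (I i) (M i) C (hA i) (hsum i) (hI i) (hF i) (hC i)
    _ = 2 * h * C - 2 * C * ∑ i, ∑ j, I i j * A i j := by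
        simp only [mul_sub, mul_one, Finset.sum_sub_distrib, Finset.sum_const,
          Finset.card_fin, nsmul_eq_mul, Finset.mul_sum]
        ring
end
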